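/- The map 𝒢 : 𝒜* → End(𝒜), 𝒢(φ)(x) = (id⊗φ)(Δ(x)), is a *-map: for every φ ∈ 𝒜*, the adjoint of the operator 𝒢(φ) with respect to the inner product ⟨a,b⟩ = h(a*b) equals 𝒢(φ*), where the involution on 𝒜* is defined by φ*(a) = conj(φ(S(a)*)). -/

import Mathlib

/- Strong left invariance of the Haar functional, `∑ h(a₁ b) a₂ = ∑ h(a b₁) S(b₂)`, follows
from left invariance by inserting `∑ b₁ ⊗ b₂ S(b₃) = b ⊗ 1`: both sides equal
`(h ⊗ id)(Δ(a) (b ⊗ 1))`, and `(h ⊗ id)(Δ(a b₁)) = h(a b₁) 1`.  Since `Δ` is a *-map,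
`Δ(a*) = ∑ a₁* ⊗ a₂*`, so strong invariance applies with `a*` in place of `a`; applying
`x ↦ conj(φ(x*))` to both sides turns it into `⟨𝒢(φ) a, b⟩ = ⟨a, 𝒢(φ*) b⟩`. -/

open scoped TensorProduct ComplexOrder
open TensorProduct

section
variable {A : Type*} [Ring A] [HopfAlgebra ℂ A] [StarRing A] [StarModule ℂ A]
  [FiniteDimensional ℂ A]

/-- `𝒢(φ) = (id ⊗ φ) ∘ Δ : A → A`. -/
noncomputable def Gmap (φ : A →ₗ[ℂ] ℂ) : A →ₗ[ℂ] A :=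
  (TensorProduct.rid ℂ A).toLinearMap ∘ₗ TensorProduct.map LinearMap.id φ ∘ₗ
    Coalgebra.comul (R := ℂ)

/-- `h ⊗ id : A ⊗ A → A`. -/
noncomputable def lap (h : A →ₗ[ℂ] ℂ) : A ⊗[ℂ] A →ₗ[ℂ] A :=
  (TensorProduct.lid ℂ A).toLinearMap ∘ₗ TensorProduct.map h LinearMap.id

/-- `id ⊗ h : A ⊗ A → A`. -/
noncomputable def rap (h : A →ₗ[ℂ] ℂ) : A ⊗[ℂ] A →ₗ[ℂ] A :=
  (TensorProduct.rid ℂ A).toLinearMap ∘ₗ TensorProduct.map LinearMap.id h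

open Coalgebra HopfAlgebra

section Hopf

variable {R H : Type*} [CommSemiring R] [Semiring H] [HopfAlgebra R H]

lemma sum_comul_mul_one_tmul_antipode {b : H} {ι : Type*} (rb : Repr R b ι) :
    ∑ j ∈ rb.index, comul (rb.left j) * (1 ⊗ₜ[R] antipode R (rb.right j)) = b ⊗ₜ[R] 1 := by
  -- by coassociativity the sum is `∑ b₁ ⊗ b₂ S(b₃) = ∑ b₁ ⊗ ε(b₂) 1`
  have coassoc := congr(LinearMap.lTensor H (LinearMap.mul' R H ∘ₗ (antipode R).lTensor H)
    $(sum_tmul_tmul_eq rb (fun j => ℛ R (rb.left j)) (fun j => ℛ R (rb.right j))))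
  have counit := congr(LinearMap.lTensor H (Algebra.linearMap R H) $(sum_tmul_counit_eq rb))
  simp only [map_sum, LinearMap.lTensor_tmul, LinearMap.comp_apply, LinearMap.mul'_apply,
    ← tmul_sum, sum_mul_antipode_eq_smul] at coassoc
  simp only [map_sum, LinearMap.lTensor_tmul, Algebra.linearMap_apply, map_one,
    Algebra.algebraMap_eq_smul_one] at counit
  rw [← counit, ← coassoc]
  simp only [← (ℛ R (rb.left _)).eq, Finset.sum_mul, Algebra.TensorProduct.tmul_mul_tmul, mul_one]

lemma lid_rTensor_mul_one_tmul (f : H →ₗ[R] R) (t : H ⊗[R] H) (z : H) :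
    TensorProduct.lid R H (f.rTensor H (t * (1 ⊗ₜ z)))
      = TensorProduct.lid R H (f.rTensor H t) * z := by
  induction t using TensorProduct.induction_on with
  | zero => simp
  | tmul x y => simp
  | add x y hx hy => simp [add_mul, hx, hy]

def IsLeftInvariant (h : H →ₗ[R] R) : Prop :=
  ∀ x : H, TensorProduct.lid R H (h.rTensor H (comul x)) = h x • 1

theorem IsLeftInvariant.sum_mul_smul_eq_sum_mul_smul_antipode {h : H →ₗ[R] R}
    (hh : IsLeftInvariant h) {a b : H} {ι κ : Type*} (ra : Repr R a ι) (rb : Repr R b κ) :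
    ∑ i ∈ ra.index, h (ra.left i * b) • ra.right i
      = ∑ j ∈ rb.index, h (a * rb.left j) • antipode R (rb.right j) := by
  let P : H ⊗[R] H →ₗ[R] H :=
    (TensorProduct.lid R H).toLinearMap ∘ₗ h.rTensor H ∘ₗ LinearMap.mulLeft R (comul a)
  have P_comul (x : H) : P (comul x) = h (a * x) • 1 := by
    simp [P, ← Bialgebra.comul_mul, hh (a * x)]
  symm
  calc ∑ j ∈ rb.index, h (a * rb.left j) • antipode R (rb.right j)
      = ∑ j ∈ rb.index, P (comul (rb.left j)) * antipode R (rb.right j) := by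
        simp only [P_comul, smul_one_mul]
    _ = ∑ j ∈ rb.index, P (comul (rb.left j) * (1 ⊗ₜ antipode R (rb.right j))) := by
        simp only [P, LinearMap.comp_apply, LinearMap.mulLeft_apply, LinearEquiv.coe_coe,
          ← mul_assoc, lid_rTensor_mul_one_tmul]
    _ = P (b ⊗ₜ 1) := by rw [← map_sum, sum_comul_mul_one_tmul_antipode]
    _ = ∑ i ∈ ra.index, h (ra.left i * b) • ra.right i := by
        simp [P, ← ra.eq, Finset.sum_mul, Algebra.TensorProduct.tmul_mul_tmul]

end Hopf

def Coalgebra.Repr.star {R C : Type*} [CommSemiring R] [AddCommGroup C] [Module R C]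
    [Coalgebra R C] [Star C] (s : C ⊗[R] C → C ⊗[R] C) (hs_add : ∀ x y, s (x + y) = s x + s y)
    (hs_tmul : ∀ x y : C, s (x ⊗ₜ[R] y) = star x ⊗ₜ[R] star y)
    (hcomul_star : ∀ x : C, comul (R := R) (star x) = s (comul x))
    {a : C} {ι : Type*} (ra : Repr R a ι) : Repr R (star a) ι where
  index := ra.index
  left i := Star.star (ra.left i)
  right i := Star.star (ra.right i)
  eq := by
    have s_sum :=
      map_sum (AddMonoidHom.mk' s hs_add) (fun i => ra.left i ⊗ₜ[R] ra.right i) ra.index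
    simp only [AddMonoidHom.mk'_apply, hs_tmul] at s_sum
    rw [hcomul_star, ← ra.eq, s_sum]

lemma Gmap_apply_eq_sum {H : Type*} [Ring H] [HopfAlgebra ℂ H] (φ : H →ₗ[ℂ] ℂ) {c : H}
    {ι : Type*} (rc : Repr ℂ c ι) : Gmap φ c = ∑ i ∈ rc.index, φ (rc.right i) • rc.left i := by
  simp [Gmap, ← rc.eq]

theorem G_star_map_general
    -- the Haar functional and its properties
    (h : A →ₗ[ℂ] ℂ)
    (h_left_inv : ∀ a : A, lap h (Coalgebra.comul a) = h a • 1)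
    -- `s` is the star operation of the *-algebra `A ⊗ A` and the comultiplication
    -- is a *-homomorphism (Hopf *-algebra structure)
    (s : A ⊗[ℂ] A → A ⊗[ℂ] A)
    (hs_add : ∀ x y : A ⊗[ℂ] A, s (x + y) = s x + s y)
    (hs_tmul : ∀ a b : A, s (a ⊗ₜ[ℂ] b) = star a ⊗ₜ[ℂ] star b)
    (hcomul_star : ∀ a : A, Coalgebra.comul (R := ℂ) (star a) = s (Coalgebra.comul a))
    -- `φ` and its involution `φ* : a ↦ conj (φ (S(a)*))`
    (φ ψ : A →ₗ[ℂ] ℂ)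
    (hψ : ∀ a : A, ψ a = (starRingEnd ℂ) (φ (star (HopfAlgebra.antipode (R := ℂ) a)))) :
    -- `⟨𝒢(φ) a, b⟩ = ⟨a, 𝒢(φ*) b⟩`, i.e. the adjoint of `𝒢(φ)` is `𝒢(φ*)`
    ∀ a b : A, h (star (Gmap φ a) * b) = h (star a * Gmap ψ b) := by
  intro a b
  let ra := ℛ ℂ a
  let rb := ℛ ℂ b
  have h_inv : IsLeftInvariant h := h_left_inv
  have strong_inv := h_inv.sum_mul_smul_eq_sum_mul_smul_antipode
    (ra.star s hs_add hs_tmul hcomul_star) rb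
  have hψ' (x : A) : star (φ (star (HopfAlgebra.antipode ℂ x))) = ψ x := (hψ x).symm
  have conj_strong_inv := congr(star (φ (star $strong_inv)))
  simp only [Repr.star, star_sum, star_smul, star_star, map_sum, map_smul, smul_eq_mul, star_mul',
    hψ'] at conj_strong_inv
  rw [Gmap_apply_eq_sum φ ra, Gmap_apply_eq_sum ψ rb]
  simp only [star_sum, star_smul, Finset.sum_mul, Finset.mul_sum, smul_mul_assoc, mul_smul_comm,
    map_sum, map_smul, smul_eq_mul]
  simpa only [mul_comm] using conj_strong_inv

theorem G_star_map
    -- the Haar functional and its properties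
    (h : A →ₗ[ℂ] ℂ) (h_unital : h 1 = 1)
    (h_pos : ∀ a : A, 0 ≤ h (star a * a))
    (h_faithful : ∀ a : A, h (star a * a) = 0 → a = 0)
    (h_left_inv : ∀ a : A, lap h (Coalgebra.comul a) = h a • 1)
    (h_right_inv : ∀ a : A, rap h (Coalgebra.comul a) = h a • 1)
    -- `s` is the star operation of the *-algebra `A ⊗ A` and the comultiplication
    -- is a *-homomorphism (Hopf *-algebra structure)
    (s : A ⊗[ℂ] A → A ⊗[ℂ] A)
    (hs_add : ∀ x y : A ⊗[ℂ] A, s (x + y) = s x + s y)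
    (hs_smul : ∀ (r : ℂ) (x : A ⊗[ℂ] A), s (r • x) = (starRingEnd ℂ) r • s x)
    (hs_tmul : ∀ a b : A, s (a ⊗ₜ[ℂ] b) = star a ⊗ₜ[ℂ] star b)
    (hcomul_star : ∀ a : A, Coalgebra.comul (R := ℂ) (star a) = s (Coalgebra.comul a))
    -- `φ` and its involution `φ* : a ↦ conj (φ (S(a)*))`
    (φ ψ : A →ₗ[ℂ] ℂ)
    (hψ : ∀ a : A, ψ a = (starRingEnd ℂ) (φ (star (HopfAlgebra.antipode (R := ℂ) a)))) :
    -- `⟨𝒢(φ) a, b⟩ = ⟨a, 𝒢(φ*) b⟩`, i.e. the adjoint of `𝒢(φ)` is `𝒢(φ*)`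
    ∀ a b : A, h (star (Gmap φ a) * b) = h (star a * Gmap ψ b) :=
  G_star_map_general h h_left_inv s hs_add hs_tmul hcomul_star φ ψ hψ

end
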